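/- arXiv:2201.04094 — 4 statements merged into one kernel-verified Lean document; each statement's English description precedes it below -/
import Mathlib

section
/- Let d be a positive integer, g a positive integer, and α a nonzero algebraic number such that [ℚ(α):ℚ] ≤ 2g and [ℚ(ζ_d):ℚ] > 4g². If ζ is a d-th root of unity with ζ ≠ 1 and α·ζ is also algebraic of degree ≤ 2g over ℚ, then a contradiction follows; i.e., α is the unique d-th root of α^d generating an extension of ℚ of degree ≤ 2g. -/
open IntermediateField Module

section MinpolyDegree

variable {K L : Type*} [Field K] [Field L] [Algebra K L]

theorem IntermediateField.natDegree_minpoly_le_finrank_of_mem {E : IntermediateField K L}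
    [FiniteDimensional K E] {z : L} (hz : z ∈ E) :
    (minpoly K z).natDegree ≤ finrank K E := by
  have hz_int : IsIntegral K z := isIntegral_iff.mp (IsIntegral.of_finite K (⟨z, hz⟩ : E))
  rw [← adjoin.finrank hz_int]
  exact finrank_le_of_le_right (adjoin_simple_le_iff.mpr hz)

theorem natDegree_minpoly_le_mul_of_mem_sup_adjoin {x y z : L} (hx : IsIntegral K x)
    (hy : IsIntegral K y) (hz : z ∈ K⟮x⟯ ⊔ K⟮y⟯) :
    (minpoly K z).natDegree ≤ (minpoly K x).natDegree * (minpoly K y).natDegree := by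
  have := adjoin.finiteDimensional hx
  have := adjoin.finiteDimensional hy
  rw [← adjoin.finrank hx, ← adjoin.finrank hy]
  exact (natDegree_minpoly_le_finrank_of_mem hz).trans (finrank_sup_le _ _)

-- `y = x⁻¹ * (x * y)` lies in the compositum of `K(x)` and `K(xy)`.
theorem natDegree_minpoly_le_mul_of_ne_zero {x y : L} (hx0 : x ≠ 0) (hx : IsIntegral K x)
    (hxy : IsIntegral K (x * y)) :
    (minpoly K y).natDegree ≤ (minpoly K x).natDegree * (minpoly K (x * y)).natDegree := by
  refine natDegree_minpoly_le_mul_of_mem_sup_adjoin hx hxy ?_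
  have hx_mem : x ∈ K⟮x⟯ ⊔ K⟮x * y⟯ := le_sup_left (b := K⟮x * y⟯) (mem_adjoin_simple_self K x)
  have hxy_mem : x * y ∈ K⟮x⟯ ⊔ K⟮x * y⟯ := le_sup_right (a := K⟮x⟯) (mem_adjoin_simple_self K _)
  simpa [hx0] using mul_mem (inv_mem hx_mem) hxy_mem

end MinpolyDegree

theorem unique_dth_root_of_small_degree_general (d g : ℕ) (hd : Nat.Prime d)
    (α : ℂ) (hα0 : α ≠ 0) (hαint : IsIntegral ℚ α)
    (hαdeg : (minpoly ℚ α).natDegree ≤ 2 * g)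
    (hζd : ∀ ζd : ℂ, IsPrimitiveRoot ζd d → 4 * g ^ 2 < (minpoly ℚ ζd).natDegree)
    (ζ : ℂ) (hζ : ζ ^ d = 1) (hζ1 : ζ ≠ 1)
    (hint : IsIntegral ℚ (α * ζ))
    (hdeg : (minpoly ℚ (α * ζ)).natDegree ≤ 2 * g) :
    False := by
  have hprim : IsPrimitiveRoot ζ d := isPrimitiveRoot_of_mem_nthRootsFinset hd
    ((Polynomial.mem_nthRootsFinset hd.pos 1).mpr hζ) hζ1
  have hlarge := hζd ζ hprim
  have hsmall := natDegree_minpoly_le_mul_of_ne_zero hα0 hαint hint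
  nlinarith [Nat.mul_le_mul hαdeg hdeg]

/-- Among the `d`-th roots of `α^d`, only `α` generates an extension of `ℚ`
of degree at most `2g`, since `[ℚ(ζ_d):ℚ] > 4g²`: if `ζ ≠ 1` is a `d`-th root
of unity and `α·ζ` also has degree ≤ 2g over ℚ, we get a contradiction. -/
theorem unique_dth_root_of_small_degree (d g : ℕ) (hd : Nat.Prime d) (hg : 0 < g)
    (α : ℂ) (hα0 : α ≠ 0) (hαint : IsIntegral ℚ α)
    (hαdeg : (minpoly ℚ α).natDegree ≤ 2 * g)
    (hζd : ∀ ζd : ℂ, IsPrimitiveRoot ζd d → 4 * g ^ 2 < (minpoly ℚ ζd).natDegree)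
    (ζ : ℂ) (hζ : ζ ^ d = 1) (hζ1 : ζ ≠ 1)
    (hint : IsIntegral ℚ (α * ζ))
    (hdeg : (minpoly ℚ (α * ζ)).natDegree ≤ 2 * g) :
    False :=
  unique_dth_root_of_small_degree_general d g hd α hα0 hαint hαdeg hζd ζ hζ hζ1 hint hdeg
end

section
/- Let G be a finite group, I a normal subgroup, and ρ an irreducible complex representation of G. Suppose χ is a one-dimensional character of G trivial on I (an 'unramified' character). Then the set of such characters χ with ρ ⊗ χ ≅ ρ forms a cyclic group of order dividing the order of the cyclic group G/I (assuming G/I is cyclic), and its order m satisfies m = ⟨Res_I ρ, Res_I ρ⟩ if the stabilizer analysis of Clifford theory applies; in particular, the number of one-dimensional characters χ of the cyclic group G/I with ρ ⊗ χ ≅ ρ equals ⟨Res_I ρ, Res_I ρ⟩. -/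
/-!
Twisting by a one-dimensional character `χ` keeps `ρ` irreducible, so by orthogonality
`|G|⁻¹ ∑_g χ(g) χ_ρ(g) χ_ρ(g⁻¹)` is `1` when `χ ρ ≅ ρ` (equivalently `χ χ_ρ = χ_ρ`) and `0`
otherwise. Summing over the characters `ψ` of the abelian group `G/I` and using
`∑_ψ ψ(g) = |G/I| · [g ∈ I]` turns the count into `|G/I| / |G| · ∑_{x ∈ I} χ_ρ(x) χ_ρ(x⁻¹)`.
Finally `χ_ρ(x⁻¹) = conj χ_ρ(x)`, as `ρ(x)` is diagonalizable with eigenvalues roots of unity.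
-/

open scoped ComplexConjugate

namespace Module.End

open LinearMap Polynomial

variable {K V : Type*} [Field K] [AddCommGroup V] [Module K V] [FiniteDimensional K V]

lemma trace_restrict_eq_mul_finrank {g : End K V} {p : Submodule K V} {c : K}
    (hg : ∀ v ∈ p, g v = c • v) (hp : Set.MapsTo g p p) :
    trace K p (g.restrict hp) = c * finrank K p := by
  have : g.restrict hp = c • LinearMap.id := LinearMap.ext fun v ↦ Subtype.ext (hg v v.2)
  rw [this, map_smul, trace_id, smul_eq_mul]

theorem trace_eq_map_trace_of_apply_eigenspace {f g : End K V} (σ : K →+* K)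
    (hf : ⨆ μ, f.eigenspace μ = ⊤) (hg : ∀ μ, ∀ v ∈ f.eigenspace μ, g v = σ μ • v) :
    trace K V g = σ (trace K V f) := by
  classical
  have hint := DirectSum.isInternal_submodule_of_iSupIndep_of_iSup_eq_top
    f.eigenspaces_iSupIndep hf
  have hfin := WellFoundedGT.finite_ne_bot_of_iSupIndep f.eigenspaces_iSupIndep
  have hgmaps (μ : K) : Set.MapsTo g (f.eigenspace μ) (f.eigenspace μ) := fun v hv ↦
    hg μ v hv ▸ Submodule.smul_mem _ _ hv
  have hfmaps (μ : K) : Set.MapsTo f (f.eigenspace μ) (f.eigenspace μ) := fun v hv ↦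
    mem_eigenspace_iff.mp hv ▸ Submodule.smul_mem _ _ hv
  rw [trace_eq_sum_trace_restrict' hint hfin hgmaps, trace_eq_sum_trace_restrict' hint hfin hfmaps,
    map_sum]
  refine Finset.sum_congr rfl fun μ _ ↦ ?_
  rw [trace_restrict_eq_mul_finrank (hg μ),
    trace_restrict_eq_mul_finrank (fun v hv ↦ mem_eigenspace_iff.mp hv), map_mul, map_natCast]

theorem iSup_eigenspace_eq_top_of_pow_eq_one [IsAlgClosed K] {f : End K V} {n : ℕ}
    (hn : (n : K) ≠ 0) (hf : f ^ n = 1) : ⨆ μ, f.eigenspace μ = ⊤ := by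
  have hsq : Squarefree (X ^ n - C (1 : K)) :=
    (separable_X_pow_sub_C 1 hn one_ne_zero).squarefree
  refine (isSemisimple_of_squarefree_aeval_eq_zero hsq ?_).iSup_eigenspace_eq_top
  simp [hf]

lemma apply_eq_conj_smul_of_mem_eigenspace {V : Type*} [AddCommGroup V] [Module ℂ V]
    {f g : End ℂ V} {n : ℕ} (hn : n ≠ 0) (hf : f ^ n = 1) (hgf : g * f = 1) {μ : ℂ} {v : V}
    (hv : v ∈ f.eigenspace μ) : g v = conj μ • v := by
  rcases eq_or_ne v 0 with rfl | hv0
  · simp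
  have hμn : μ ^ n = 1 := by
    have := (show f.HasEigenvector μ v from ⟨by simpa using hv, hv0⟩).pow_apply n
    rw [hf, one_apply] at this
    exact smul_left_injective ℂ hv0 (show μ ^ n • v = (1 : ℂ) • v by rw [one_smul, ← this])
  have hμ0 : μ ≠ 0 := by rintro rfl; simp [zero_pow hn] at hμn
  rw [← Complex.inv_eq_conj (Complex.norm_eq_one_of_pow_eq_one hμn hn)]
  have hgfv : g (f v) = v := by rw [← mul_apply, hgf, one_apply]
  rw [mem_eigenspace_iff.mp hv, map_smul] at hgfv
  exact (eq_inv_smul_iff₀ hμ0).mpr hgfv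

theorem trace_eq_conj_trace_of_pow_eq_one {V : Type*} [AddCommGroup V] [Module ℂ V]
    [FiniteDimensional ℂ V] {f g : End ℂ V} {n : ℕ} (hn : n ≠ 0) (hf : f ^ n = 1)
    (hgf : g * f = 1) : trace ℂ V g = conj (trace ℂ V f) :=
  trace_eq_map_trace_of_apply_eigenspace _
    (iSup_eigenspace_eq_top_of_pow_eq_one (Nat.cast_ne_zero.mpr hn) hf)
    fun _ _ ↦ apply_eq_conj_smul_of_mem_eigenspace hn hf hgf

end Module.End

theorem FDRep.char_inv {G : Type*} [Group G] [Finite G] (V : FDRep ℂ G) (g : G) :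
    V.character g⁻¹ = conj (V.character g) :=
  Module.End.trace_eq_conj_trace_of_pow_eq_one (orderOf_pos g).ne'
    (by rw [← map_pow, pow_orderOf_eq_one, map_one]) (by rw [← map_mul, inv_mul_cancel, map_one])

namespace Representation

variable {k G V : Type*} [CommRing k] [Monoid G] [AddCommGroup V] [Module k V]

def twist (ρ : Representation k G V) (χ : G →* kˣ) : Representation k G V where
  toFun g := (χ g : k) • ρ g
  map_one' := by simp
  map_mul' g h := by simp only [map_mul, Units.val_mul, smul_mul_smul_comm]

end Representation

open CategoryTheory

namespace FDRep

universe u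

variable {k G : Type u} [Field k] [Group G]

noncomputable abbrev twist (V : FDRep k G) (χ : G →* kˣ) : FDRep k G :=
  FDRep.of (Representation.twist V.ρ χ)

@[simp]
lemma char_twist (V : FDRep k G) (χ : G →* kˣ) (g : G) :
    (V.twist χ).character g = χ g * V.character g :=
  map_smul (LinearMap.trace k V) (χ g : k) (V.ρ g)

variable [IsAlgClosed k] [CharZero k] [Fintype G]

instance (V : FDRep k G) [Simple V] (χ : G →* kˣ) : Simple (V.twist χ) := by
  rw [simple_iff_char_is_norm_one, ← (simple_iff_char_is_norm_one V).mp inferInstance]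
  refine Finset.sum_congr rfl fun g _ ↦ ?_
  rw [char_twist, char_twist, map_inv, Units.val_inv_eq_inv_val]
  field_simp

theorem character_eq_iff_nonempty_iso {V W : FDRep k G} [Simple V] [Simple W] :
    V.character = W.character ↔ Nonempty (V ≅ W) := by
  refine ⟨fun h ↦ ?_, fun ⟨i⟩ ↦ char_iso i⟩
  have horth := char_orthonormal V W
  rw [h, (simple_iff_char_is_norm_one W).mp inferInstance, inv_mul_cancel_of_invertible] at horth
  by_contra hVW
  simp [hVW] at horth

theorem card_inv_mul_sum_char_mul_char_inv (V W : FDRep k G) [Simple V] [Simple W]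
    [Decidable (V.character = W.character)] :
    (Nat.card G : k)⁻¹ * ∑ g, V.character g * W.character g⁻¹ =
      if V.character = W.character then 1 else 0 := by
  classical
  rw [char_orthonormal]
  exact if_congr character_eq_iff_nonempty_iso.symm rfl rfl

end FDRep

section Duality

open scoped IsMulCommutative

variable {Q K : Type*} [Group Q] [IsMulCommutative Q] [Finite Q] [Field K]
  [HasEnoughRootsOfUnity K (Monoid.exponent Q)] [Fintype (Q →* Kˣ)]

theorem MonoidHom.sum_units_apply_eq_ite [DecidableEq Q] (q : Q) :
    ∑ ψ : Q →* Kˣ, (ψ q : K) = if q = 1 then (Nat.card Q : K) else 0 := by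
  split_ifs with hq
  · simp [hq, ← Nat.card_eq_fintype_card, CommGroup.card_monoidHom_of_hasEnoughRootsOfUnity]
  · obtain ⟨ψ₀, hψ₀⟩ := CommGroup.exists_apply_ne_one_of_hasEnoughRootsOfUnity Q K hq
    refine sum_hom_units_eq_zero ((Units.coeHom K).comp (MonoidHom.eval q)) fun h ↦ hψ₀ ?_
    exact Units.ext (DFunLike.congr_fun h ψ₀)

end Duality

namespace QuotientGroup

variable {G : Type*} [Group G] (N : Subgroup G) [N.Normal]

theorem ncard_setOf_forall_mem_eq_one_and {A : Type*} [CommGroup A] (P : (G →* A) → Prop) :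
    {χ : G →* A | (∀ n ∈ N, χ n = 1) ∧ P χ}.ncard =
      {ψ : G ⧸ N →* A | P (ψ.comp (mk' N))}.ncard := by
  have hinj : Function.Injective fun ψ : G ⧸ N →* A ↦ ψ.comp (mk' N) :=
    fun _ _ h ↦ (MonoidHom.cancel_right (mk'_surjective N)).mp h
  rw [← Set.ncard_image_of_injective _ hinj]
  congr 1
  ext χ
  constructor
  · rintro ⟨hN, hP⟩
    have hχ : N ≤ χ.ker := fun n hn ↦ MonoidHom.mem_ker.mpr (hN n hn)
    exact ⟨lift N χ hχ, by simpa [lift_comp_mk'], MonoidHom.ext fun _ ↦ rfl⟩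
  · rintro ⟨ψ, hP, rfl⟩
    exact ⟨fun n hn ↦ by simp [(eq_one_iff n).mpr hn], hP⟩

variable {K : Type*} [Fintype G] [Fintype N] [IsMulCommutative (G ⧸ N)] [Field K]
  [HasEnoughRootsOfUnity K (Monoid.exponent (G ⧸ N))] [Fintype (G ⧸ N →* Kˣ)]

theorem sum_monoidHom_sum_apply_mul (f : G → K) :
    ∑ ψ : G ⧸ N →* Kˣ, ∑ g : G, (ψ (g : G ⧸ N) : K) * f g = Nat.card (G ⧸ N) * ∑ n : N, f n := by
  classical
  rw [Finset.sum_comm]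
  simp_rw [← Finset.sum_mul, MonoidHom.sum_units_apply_eq_ite, eq_one_iff, ite_mul, zero_mul,
    ← Finset.sum_filter, Finset.mul_sum]
  exact Finset.sum_subtype _ (by simp) _

end QuotientGroup

/-- For `G` finite with normal subgroup `I` and cyclic quotient `G/I`, and `ρ`
an irreducible complex representation of `G`, the number of one-dimensional
characters `χ` of `G` trivial on `I` (i.e. characters of the cyclic group `G/I`)
with `ρ ⊗ χ ≅ ρ` (equivalently, with equal characters) equals the inner product
`⟨Res_I ρ, Res_I ρ⟩`. -/
theorem card_unramified_stabilizing_twists (G : Type) [Group G] [Fintype G]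
    (I : Subgroup G) [I.Normal] [IsCyclic (G ⧸ I)]
    (ρ : FDRep ℂ G) (hρ : CategoryTheory.Simple ρ) [Fintype I] :
    (Set.ncard {χ : G →* ℂˣ | (∀ i ∈ I, χ i = 1) ∧
        ∀ g : G, (χ g : ℂ) * ρ.character g = ρ.character g} : ℂ) =
      (Fintype.card I : ℂ)⁻¹ *
        ∑ x : I, conj (ρ.character (x : G)) * ρ.character (x : G) := by
  let _ : Fintype (G ⧸ I →* ℂˣ) := Fintype.ofFinite _
  have hstab (χ : G →* ℂˣ) : (∀ g, (χ g : ℂ) * ρ.character g = ρ.character g) ↔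
      (ρ.twist χ).character = ρ.character := by
    simp_rw [funext_iff, FDRep.char_twist]
  have hcount (χ : G →* ℂˣ) : (if (ρ.twist χ).character = ρ.character then (1 : ℂ) else 0) =
      (Nat.card G : ℂ)⁻¹ * ∑ g, (χ g : ℂ) * (ρ.character g * ρ.character g⁻¹) := by
    simp_rw [← FDRep.card_inv_mul_sum_char_mul_char_inv, FDRep.char_twist, mul_assoc]
  simp_rw [hstab]
  rw [QuotientGroup.ncard_setOf_forall_mem_eq_one_and, Set.ncard_eq_toFinset_card',
    Set.toFinset_ofPred, Finset.card_filter]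
  push_cast
  simp_rw [hcount, MonoidHom.comp_apply, QuotientGroup.mk'_apply, ← Finset.mul_sum,
    QuotientGroup.sum_monoidHom_sum_apply_mul, FDRep.char_inv]
  rw [I.card_eq_card_quotient_mul_card_subgroup, Nat.card_eq_fintype_card (α := I), Nat.cast_mul,
    mul_inv_rev, mul_assoc, inv_mul_cancel_left₀ (Nat.cast_ne_zero.mpr Nat.card_pos.ne')]
  simp_rw [mul_comm (ρ.character _)]
end

section
/- Let λ₁,…,λₘ be nonzero complex numbers with m ≤ n, and let d be a prime with [ℚ(ζ_d):ℚ] > n² (equivalently d - 1 > n²). Suppose each λ_k is algebraic of degree at most n over ℚ (e.g., a Weil number appearing as a Frobenius eigenvalue of an n-dimensional representation). Then the multiset {λ₁,…,λₘ} is uniquely determined by the multiset {λ₁^d,…,λₘ^d} among multisets of algebraic numbers of degree ≤ n over ℚ. -/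
/-!
If `x ^ p = y ^ p` with `y ≠ 0` and `x ≠ y`, then `x / y` is a primitive `p`-th root of unity, so
its degree over `ℚ` is `p - 1`. But `x / y` lies in `ℚ(x, y)`, whose degree is at most
`deg x * deg y ≤ n²`. Hence `p`-th powering is injective on algebraic numbers of degree `≤ n`
when `n² < p - 1`, and a multiset of such numbers is recovered from its image.
-/

open Polynomial IntermediateField Module

theorem natDegree_minpoly_le_mul_of_mem_sup {K L : Type*} [Field K] [Field L] [Algebra K L]
    {x y z : L} (hx : IsIntegral K x) (hy : IsIntegral K y) (hz : z ∈ K⟮x⟯ ⊔ K⟮y⟯) :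
    (minpoly K z).natDegree ≤ (minpoly K x).natDegree * (minpoly K y).natDegree := by
  have := adjoin.finiteDimensional hx
  have := adjoin.finiteDimensional hy
  calc (minpoly K z).natDegree = (minpoly K (⟨z, hz⟩ : ↥(K⟮x⟯ ⊔ K⟮y⟯))).natDegree := by
        rw [minpoly_eq]
    _ ≤ finrank K ↥(K⟮x⟯ ⊔ K⟮y⟯) := minpoly.natDegree_le _
    _ ≤ finrank K K⟮x⟯ * finrank K K⟮y⟯ := finrank_sup_le _ _
    _ = (minpoly K x).natDegree * (minpoly K y).natDegree := by
        rw [adjoin.finrank hx, adjoin.finrank hy]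

theorem natDegree_minpoly_rat_of_pow_prime_eq_one {L : Type*} [Field L] [CharZero L] {p : ℕ}
    (hp : p.Prime) {ζ : L} (hζp : ζ ^ p = 1) (hζ1 : ζ ≠ 1) :
    (minpoly ℚ ζ).natDegree = p - 1 := by
  have hprim : IsPrimitiveRoot ζ p :=
    isPrimitiveRoot_of_mem_nthRootsFinset hp
      ((mem_nthRootsFinset hp.pos 1).mpr hζp) hζ1
  rw [← cyclotomic_eq_minpoly_rat hprim hp.pos, natDegree_cyclotomic, Nat.totient_prime hp]

theorem injOn_pow_prime_of_natDegree_minpoly_le {L : Type*} [Field L] [CharZero L] {n p : ℕ}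
    (hp : p.Prime) (hpn : n ^ 2 < p - 1) :
    Set.InjOn (· ^ p) {x : L | IsIntegral ℚ x ∧ (minpoly ℚ x).natDegree ≤ n} := by
  rintro x ⟨hx, hxn⟩ y ⟨hy, hyn⟩ (hxy : x ^ p = y ^ p)
  rcases eq_or_ne y 0 with rfl | hy0
  · simpa [hp.ne_zero] using hxy
  by_contra hne
  have hζp : (x / y) ^ p = 1 := by rw [div_pow, hxy, div_self (pow_ne_zero _ hy0)]
  have hζ1 : x / y ≠ 1 := by rwa [Ne, div_eq_one_iff_eq hy0]
  have hζmem : x / y ∈ ℚ⟮x⟯ ⊔ ℚ⟮y⟯ :=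
    div_mem (le_sup_left (b := ℚ⟮y⟯) (mem_adjoin_simple_self ℚ x))
      (le_sup_right (a := ℚ⟮x⟯) (mem_adjoin_simple_self ℚ y))
  have hdeg := (natDegree_minpoly_le_mul_of_mem_sup hx hy hζmem).trans (Nat.mul_le_mul hxn hyn)
  rw [natDegree_minpoly_rat_of_pow_prime_eq_one hp hζp hζ1, ← sq] at hdeg
  omega

theorem Multiset.eq_of_map_eq_of_injOn {α β : Type*} {f : α → β} {S : Set α} (hf : S.InjOn f)
    {s t : Multiset α} (hs : ∀ x ∈ s, x ∈ S) (ht : ∀ x ∈ t, x ∈ S) (h : s.map f = t.map f) :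
    s = t := by
  classical
  induction s using Multiset.induction generalizing t with
  | empty => simpa [eq_comm] using h
  | cons a s ih =>
    have ha : a ∈ S := hs a (mem_cons_self a s)
    obtain ⟨b, hb, hba⟩ := mem_map.mp (h ▸ mem_map_of_mem f (mem_cons_self a s))
    obtain rfl : b = a := hf (ht b hb) ha hba
    rw [← cons_erase hb, map_cons, map_cons, cons_inj_right] at h
    rw [← cons_erase hb, ih (fun x hx => hs x (mem_cons_of_mem hx))
      (fun x hx => ht x (mem_of_mem_erase hx)) h]

theorem multiset_determined_by_dth_powers_general (n d : ℕ) (hd : Nat.Prime d)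
    (hdn : n ^ 2 < d - 1)
    (s t : Multiset ℂ)
    (hsalg : ∀ x ∈ s, IsIntegral ℚ x ∧ (minpoly ℚ x).natDegree ≤ n)
    (htalg : ∀ x ∈ t, IsIntegral ℚ x ∧ (minpoly ℚ x).natDegree ≤ n)
    (h : s.map (fun x => x ^ d) = t.map (fun x => x ^ d)) :
    s = t :=
  Multiset.eq_of_map_eq_of_injOn (injOn_pow_prime_of_natDegree_minpoly_le hd hdn) hsalg htalg h

/-- Eigenvalue recovery: if `d` is a prime with `d - 1 > n²`, then a multiset of
at most `n` nonzero algebraic numbers, each of degree at most `n` over `ℚ`, is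
determined by the multiset of its `d`-th powers. -/
theorem multiset_determined_by_dth_powers (n d : ℕ) (hd : Nat.Prime d)
    (hdn : n ^ 2 < d - 1)
    (s t : Multiset ℂ)
    (hsn : Multiset.card s ≤ n) (htn : Multiset.card t ≤ n)
    (hs0 : ∀ x ∈ s, x ≠ 0) (ht0 : ∀ x ∈ t, x ≠ 0)
    (hsalg : ∀ x ∈ s, IsIntegral ℚ x ∧ (minpoly ℚ x).natDegree ≤ n)
    (htalg : ∀ x ∈ t, IsIntegral ℚ x ∧ (minpoly ℚ x).natDegree ≤ n)
    (h : s.map (fun x => x ^ d) = t.map (fun x => x ^ d)) :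
    s = t :=
  multiset_determined_by_dth_powers_general n d hd hdn s t hsalg htalg h
end

section
/- Let G be a finite group, I ⊴ G with G/I cyclic generated by the image of φ. Let ρ be any complex representation of G and {ρ_i} a set of irreducible representations of G, one from each orbit under twisting by one-dimensional characters of G/I. Then there exist representations Ψ_i of the cyclic group G/I such that ρ's semisimplification is isomorphic to ⊕_i ρ_i ⊗ Ψ_i, where Ψ_i is inflated from G/I. -/
/-!
By Maschke's theorem every subrepresentation has an invariant complement, and characters are
additive on complements, so by induction on the dimension every character is a sum of characters
of irreducible representations. By exhaustion each of these is `χ · χ_{ρ i}` for a character `χ`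
trivial on `I`, i.e. inflated from `G ⧸ I`. Collecting, for each `i`, the characters `χ` that occur
as a direct sum of one-dimensional representations of `G ⧸ I` gives `Ψ i`.
-/

open CategoryTheory Module

universe u w

theorem LinearMap.trace_eq_trace_restrict_add_trace_restrict {k V : Type*} [Field k]
    [AddCommGroup V] [Module k V] [FiniteDimensional k V] {p q : Submodule k V} (h : IsCompl p q)
    {f : V →ₗ[k] V} (hp : Set.MapsTo f p p) (hq : Set.MapsTo f q q) :
    trace k V f = trace k p (f.restrict hp) + trace k q (f.restrict hq) := by
  have hN : DirectSum.IsInternal fun b : Bool => cond b p q :=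
    (DirectSum.isInternal_submodule_iff_isCompl _ (i := true) (j := false) (by decide)
      (by ext b; cases b <;> simp)).mpr h
  rw [trace_eq_sum_trace_restrict hN (f := f) (Bool.rec hq hp), Fintype.sum_bool]
  rfl

theorem Subrepresentation.isCompl_toSubmodule {k G V : Type*} [Semiring k] [Monoid G]
    [AddCommMonoid V] [Module k V] {ρ : Representation k G V} {p q : Subrepresentation ρ}
    (h : IsCompl p q) : IsCompl p.toSubmodule q.toSubmodule :=
  ⟨disjoint_iff.mpr (congrArg Subrepresentation.toSubmodule h.inf_eq_bot),
    codisjoint_iff.mpr (congrArg Subrepresentation.toSubmodule h.sup_eq_top)⟩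

namespace Representation

variable {k : Type u} {G : Type*} {V : Type w} [Field k] [AddCommGroup V] [Module k V]

theorem character_eq_add_of_isCompl [Monoid G] [FiniteDimensional k V] {ρ : Representation k G V}
    {p q : Subrepresentation ρ} (h : IsCompl p q) :
    ρ.character = p.toRepresentation.character + q.toRepresentation.character :=
  funext fun g => LinearMap.trace_eq_trace_restrict_add_trace_restrict
    (Subrepresentation.isCompl_toSubmodule h) (p.apply_mem_toSubmodule g)
    (q.apply_mem_toSubmodule g)

theorem exists_ne_bot_ne_top_of_not_isIrreducible [Monoid G] [Nontrivial V]
    {ρ : Representation k G V} (hρ : ¬ ρ.IsIrreducible) :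
    ∃ p : Subrepresentation ρ, p ≠ ⊥ ∧ p ≠ ⊤ := by
  by_contra! h
  have : Nontrivial (Subrepresentation ρ) :=
    ⟨⊥, ⊤, fun h' => bot_ne_top (congrArg Subrepresentation.toSubmodule h')⟩
  exact hρ ⟨fun p => or_iff_not_imp_left.mpr (h p)⟩

theorem character_mem_of_forall_isIrreducible [Group G] [Finite G] [NeZero (Nat.card G : k)]
    (M : AddSubmonoid (G → k))
    (hM : ∀ (W : Type w) [AddCommGroup W] [Module k W] [FiniteDimensional k W]
      (σ : Representation k G W), σ.IsIrreducible → σ.character ∈ M)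
    [FiniteDimensional k V] (ρ : Representation k G V) : ρ.character ∈ M := by
  induction hn : finrank k V using Nat.strong_induction_on generalizing V with
  | _ n ih =>
  rcases subsingleton_or_nontrivial V with _ | _
  · have : ρ.character = 0 := funext fun g => by simp [character, Subsingleton.elim (ρ g) 0]
    exact this ▸ M.zero_mem
  by_cases hirr : ρ.IsIrreducible
  · exact hM V ρ hirr
  obtain ⟨p, hp_bot, hp_top⟩ := exists_ne_bot_ne_top_of_not_isIrreducible hirr
  obtain ⟨q, hpq⟩ := exists_isCompl p
  have hq_top : q ≠ ⊤ := fun h => hp_bot (eq_bot_of_top_isCompl (h ▸ hpq.symm))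
  rw [character_eq_add_of_isCompl hpq]
  exact M.add_mem
    (ih _ (hn ▸ Submodule.finrank_lt fun h => hp_top (Subrepresentation.ext h)) _ rfl)
    (ih _ (hn ▸ Submodule.finrank_lt fun h => hq_top (Subrepresentation.ext h)) _ rfl)

end Representation

namespace FDRep

variable {k : Type u} [Field k]

theorem simple_of_isIrreducible {G : Type*} [Monoid G] {V : Type u} [AddCommGroup V] [Module k V]
    [FiniteDimensional k V] {σ : Representation k G V} (hσ : σ.IsIrreducible) :
    Simple (FDRep.of σ) := by
  let F := forget₂ (FDRep k G) (Rep k G) ⋙ Rep.toModuleMonoidAlgebra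
  have : Simple (F.obj (FDRep.of σ)) :=
    simple_iff_isSimpleModule.mpr (σ.irreducible_iff_isSimpleModule_asModule.mp hσ)
  exact F.simple_of_simple_obj _

variable (k) (H : Type*) [Monoid H]

def characters : AddSubmonoid (H → k) where
  carrier := Set.range FDRep.character
  zero_mem' := ⟨FDRep.of (Representation.trivial k H PUnit.{u + 1}), funext fun h => by
    simp [FDRep.character]⟩
  add_mem' := by
    rintro _ _ ⟨V, rfl⟩ ⟨W, rfl⟩
    exact ⟨FDRep.of (Representation.prod V.ρ W.ρ), funext fun h => LinearMap.trace_prodMap' _ _⟩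

variable {k H}

theorem monoidHom_mem_characters (ψ : H →* k) : ⇑ψ ∈ characters k H :=
  show ⇑ψ ∈ Set.range _ from
    ⟨FDRep.of ((algebraMap k (Module.End k k)).toMonoidHom.comp ψ), funext fun h => by
      simp [FDRep.character, Module.algebraMap_end_eq_smul_id]⟩

end FDRep

section UnramifiedTwists

variable {k : Type u} [Field k] {G : Type*} [Group G] (I : Subgroup G) [I.Normal]
  {ι : Type*} [Fintype ι] (ρ : ι → FDRep k G)

noncomputable def twistSum : (ι → G ⧸ I → k) →+ (G → k) where
  toFun ψ g := ∑ i, (ρ i).character g * ψ i g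
  map_zero' := by ext; simp
  map_add' ψ ψ' := by ext; simp [mul_add, Finset.sum_add_distrib]

/-- The characters of `⊕ᵢ ρ i ⊗ Ψᵢ` with each `Ψᵢ` inflated from `G ⧸ I`. -/
noncomputable def unramifiedTwists : AddSubmonoid (G → k) :=
  (AddSubmonoid.pi Set.univ fun _ => FDRep.characters k (G ⧸ I)).map (twistSum I ρ)

theorem twist_mem_unramifiedTwists (i : ι) (χ : G →* kˣ) (hχ : ∀ x ∈ I, χ x = 1) :
    (fun g => (χ g : k) * (ρ i).character g) ∈ unramifiedTwists I ρ := by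
  classical
  let χbar : G ⧸ I →* k := (Units.coeHom k).comp (QuotientGroup.lift I χ hχ)
  have hχbar (g : G) : χbar g = χ g := rfl
  refine ⟨Pi.single i χbar, fun j _ => ?_, funext fun g => ?_⟩
  · rcases eq_or_ne j i with rfl | hj
    · rw [Pi.single_eq_same]; exact FDRep.monoidHom_mem_characters χbar
    · rw [Pi.single_eq_of_ne hj]; exact (FDRep.characters k (G ⧸ I)).zero_mem
  · simp [twistSum, hχbar, Pi.single_apply, ite_apply, mul_comm]

end UnramifiedTwists

theorem decomposition_into_unramified_twists_general (G : Type) [Group G] [Fintype G]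
    (I : Subgroup G) [I.Normal]
    (ι : Type) [Fintype ι] (ρi : ι → FDRep ℂ G)
    (hexhaust : ∀ σ : FDRep ℂ G, CategoryTheory.Simple σ →
      ∃ i, ∃ χ : G →* ℂˣ, (∀ x ∈ I, χ x = 1) ∧
        ∀ g : G, σ.character g = (χ g : ℂ) * (ρi i).character g)
    (ρ : FDRep ℂ G) :
    ∃ Ψ : ι → FDRep ℂ (G ⧸ I),
      ∀ g : G, ρ.character g =
        ∑ i, (ρi i).character g * (Ψ i).character ((g : G ⧸ I)) := by
  obtain ⟨ψ, hψ, hρ⟩ : ρ.character ∈ unramifiedTwists I ρi := by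
    refine Representation.character_mem_of_forall_isIrreducible _ (fun W _ _ _ σ hσ => ?_) ρ.ρ
    obtain ⟨i, χ, hχI, hχ⟩ := hexhaust _ (FDRep.simple_of_isIrreducible hσ)
    show (FDRep.of σ).character ∈ _
    rw [funext hχ]
    exact twist_mem_unramifiedTwists I ρi i χ hχI
  choose Ψ hΨ using fun i => hψ i (Set.mem_univ i)
  exact ⟨Ψ, fun g => by rw [← hρ]; simp [twistSum, hΨ]⟩

/-- Decomposition into unramified twists: let `{ρᵢ}` be irreducible complex
representations of `G`, one in each orbit under twisting by one-dimensional
characters trivial on `I`. Then every representation `ρ` of `G` decomposes (up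
to semisimplification, i.e. at the level of characters) as `⊕ᵢ ρᵢ ⊗ Ψᵢ` with
`Ψᵢ` inflated from the cyclic quotient `G/I`. -/
theorem decomposition_into_unramified_twists (G : Type) [Group G] [Fintype G]
    (I : Subgroup G) [I.Normal] [IsCyclic (G ⧸ I)]
    (ι : Type) [Fintype ι] (ρi : ι → FDRep ℂ G)
    (hsimple : ∀ i, CategoryTheory.Simple (ρi i))
    (hdistinct : ∀ i j, i ≠ j →
      ¬ ∃ χ : G →* ℂˣ, (∀ x ∈ I, χ x = 1) ∧
        ∀ g : G, (ρi j).character g = (χ g : ℂ) * (ρi i).character g)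
    (hexhaust : ∀ σ : FDRep ℂ G, CategoryTheory.Simple σ →
      ∃ i, ∃ χ : G →* ℂˣ, (∀ x ∈ I, χ x = 1) ∧
        ∀ g : G, σ.character g = (χ g : ℂ) * (ρi i).character g)
    (ρ : FDRep ℂ G) :
    ∃ Ψ : ι → FDRep ℂ (G ⧸ I),
      ∀ g : G, ρ.character g =
        ∑ i, (ρi i).character g * (Ψ i).character ((g : G ⧸ I)) :=
  decomposition_into_unramified_twists_general G I ι ρi hexhaust ρ
end
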